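/- Let G be a weighted undirected graph with Laplacian L_G. Then the effective resistance R(u,v) = b_{uv}ᵀ L_G⁺ b_{uv} satisfies the triangle inequality: for any vertices u, v, x in the same connected component, R(u,x) ≤ R(u,v) + R(v,x). -/

import Mathlib

open Matrix

/-- `bv u v = e_u - e_v`. -/
def bv {n : ℕ} (u v : Fin n) : Fin n → ℝ := Pi.single u 1 - Pi.single v 1

/-- The four Moore–Penrose conditions characterizing the pseudoinverse. -/
def MoorePenrose {n : Type*} [Fintype n] (L Lp : Matrix n n ℝ) : Prop :=
  L * Lp * L = L ∧ Lp * L * Lp = Lp ∧ (L * Lp)ᵀ = L * Lp ∧ (Lp * L)ᵀ = Lp * L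

/-! Write `φ_ab = L⁺ b_ab`, so that `L φ_ab = b_ab` and
`R(u,x) = R(u,v) + R(v,x) + (φ_vx u - φ_vx v) + (φ_uv v - φ_uv x)`.
A potential with `L φ = e_s - e_t` is harmonic away from `s` and `t`; on a connected graph
the maximum principle puts its maximum at `s` and its minimum at `t`, so both cross terms
are `≤ 0`. -/

theorem bv_dotProduct {n : ℕ} (s t : Fin n) (f : Fin n → ℝ) : bv s t ⬝ᵥ f = f s - f t := by
  simp [bv, sub_dotProduct, single_dotProduct]

theorem bv_add_bv {n : ℕ} (u v x : Fin n) : bv u v + bv v x = bv u x := by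
  simp only [bv]; abel

section

variable {ι : Type*} [Fintype ι]

theorem exists_const_of_mulVec_eq_zero {L : Matrix ι ι ℝ} (hone : L *ᵥ 1 = 0)
    (hrank : L.rank = Fintype.card ι - 1) {g : ι → ℝ} (hg : L *ᵥ g = 0) :
    ∃ c : ℝ, g = fun _ => c := by
  cases isEmpty_or_nonempty ι
  · exact ⟨0, Subsingleton.elim _ _⟩
  have hdim : Module.finrank ℝ (LinearMap.ker L.mulVecLin) = 1 := by
    have := LinearMap.finrank_range_add_finrank_ker L.mulVecLin
    rw [← Matrix.rank, hrank, Module.finrank_fintype_fun_eq_card] at this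
    have := Fintype.card_pos (α := ι)
    omega
  have hone_ne : (⟨1, hone⟩ : LinearMap.ker L.mulVecLin) ≠ 0 := by
    simp [Subtype.ext_iff]
  obtain ⟨c, hc⟩ := (finrank_eq_one_iff_of_nonzero' _ hone_ne).mp hdim ⟨g, hg⟩
  refine ⟨c, funext fun i => ?_⟩
  simpa using congrFun (congrArg Subtype.val hc) i |>.symm

theorem MoorePenrose.mulVec_mulVec_eq_self {L Lp : Matrix ι ι ℝ} (hMP : MoorePenrose L Lp)
    (hL : Lᵀ = L) {b : ι → ℝ} (hb : ∀ z, L *ᵥ z = 0 → z ⬝ᵥ b = 0) :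
    L *ᵥ (Lp *ᵥ b) = b := by
  obtain ⟨hLLpL, -, hLLp, -⟩ := hMP
  have hLP : L * (L * Lp) = L := by
    conv_rhs => rw [← hL, ← hLLpL]
    rw [transpose_mul, hLLp, hL]
  -- `r` lies in `ker L` and, by symmetry of `L`, is orthogonal to it.
  set r := b - L *ᵥ (Lp *ᵥ b)
  have hr : L *ᵥ r = 0 := by
    simp only [r, mulVec_sub, mulVec_mulVec, hLP, sub_self]
  have hrr : r ⬝ᵥ r = 0 := by
    rw [show r ⬝ᵥ r = r ⬝ᵥ b - r ⬝ᵥ (L *ᵥ (Lp *ᵥ b)) from dotProduct_sub _ _ _,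
      hb r hr, dotProduct_mulVec, ← mulVec_transpose, hL, hr, zero_dotProduct, sub_zero]
  exact (sub_eq_zero.mp (dotProduct_self_eq_zero.mp hrr)).symm

end

section Laplacian

variable {ι : Type*} [Fintype ι] [DecidableEq ι] (W : ι → ι → ℝ)

def laplacian : Matrix ι ι ℝ :=
  of fun i j => if i = j then ∑ k, W i k else -(W i j)

variable {W}

theorem laplacian_mulVec_apply (hdiag : ∀ i, W i i = 0) (f : ι → ℝ) (i : ι) :
    (laplacian W *ᵥ f) i = ∑ k, W i k * (f i - f k) := by
  have hentry : ∀ j, laplacian W i j = (if i = j then ∑ k, W i k else 0) - W i j := by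
    intro j
    by_cases h : i = j
    · subst h; simp [laplacian, hdiag]
    · simp [laplacian, h]
  simp only [mulVec, dotProduct, hentry, sub_mul, ite_mul, zero_mul, Finset.sum_sub_distrib,
    Finset.sum_ite_eq, Finset.mem_univ, if_true, Finset.sum_mul, mul_sub]

theorem laplacian_mulVec_one (hdiag : ∀ i, W i i = 0) : laplacian W *ᵥ 1 = 0 := by
  ext i
  simp [laplacian_mulVec_apply hdiag]

theorem laplacian_transpose (hsymm : ∀ i j, W i j = W j i) : (laplacian W)ᵀ = laplacian W := by
  ext i j
  simp only [laplacian, transpose_apply, of_apply, eq_comm (a := j), hsymm j i]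
  split_ifs with h
  · subst h; rfl
  · rfl

theorem eq_of_forall_le_of_laplacian_mulVec_nonpos (hnonneg : ∀ i j, 0 ≤ W i j)
    (hdiag : ∀ i, W i i = 0) {φ : ι → ℝ}
    {p : ι} (hmax : ∀ k, φ k ≤ φ p) (hLφ : (laplacian W *ᵥ φ) p ≤ 0) {k : ι} (hk : W p k ≠ 0) :
    φ k = φ p := by
  have hterm : ∀ j ∈ Finset.univ, 0 ≤ W p j * (φ p - φ j) :=
    fun j _ => mul_nonneg (hnonneg p j) (sub_nonneg.mpr (hmax j))
  rw [laplacian_mulVec_apply hdiag] at hLφ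
  have hzero := (Finset.sum_eq_zero_iff_of_nonneg hterm).mp
    (le_antisymm hLφ (Finset.sum_nonneg hterm)) k (Finset.mem_univ k)
  rcases mul_eq_zero.mp hzero with hW | hφ
  · exact absurd hW hk
  · linarith

/-- The indicator of a set closed under edges is harmonic, hence constant. -/
theorem mem_of_forall_weight_ne_zero_mem (hsymm : ∀ i j, W i j = W j i)
    (hdiag : ∀ i, W i i = 0)
    (hker : ∀ g : ι → ℝ, laplacian W *ᵥ g = 0 → ∃ c : ℝ, g = fun _ => c) {S : Set ι} (hS : ∀ p k, p ∈ S → W p k ≠ 0 → k ∈ S)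
    {p : ι} (hp : p ∈ S) (q : ι) : q ∈ S := by
  classical
  have hharm : laplacian W *ᵥ S.indicator 1 = 0 := by
    ext i
    rw [laplacian_mulVec_apply hdiag, Pi.zero_apply]
    refine Finset.sum_eq_zero fun k _ => ?_
    by_cases hW : W i k = 0
    · simp [hW]
    have hik : i ∈ S ↔ k ∈ S := ⟨(hS i k · hW), (hS k i · (hsymm k i ▸ hW))⟩
    simp [Set.indicator_apply, hik]
  obtain ⟨c, hc⟩ := hker _ hharm
  by_contra hq
  have hpq := (congrFun hc p).trans (congrFun hc q).symm
  simp [hp, hq] at hpq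

section MaximumPrinciple

variable (hsymm : ∀ i j, W i j = W j i) (hnonneg : ∀ i j, 0 ≤ W i j) (hdiag : ∀ i, W i i = 0)
  (hker : ∀ g : ι → ℝ, laplacian W *ᵥ g = 0 → ∃ c : ℝ, g = fun _ => c)
include hsymm hnonneg hdiag hker

theorem le_source_of_laplacian_mulVec_eq_single_sub_single {s t : ι} {φ : ι → ℝ}
    (hφ : laplacian W *ᵥ φ = Pi.single s 1 - Pi.single t 1) (w : ι) : φ w ≤ φ s := by
  obtain ⟨m, -, hm⟩ := Finset.exists_max_image Finset.univ φ ⟨w, Finset.mem_univ w⟩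
  by_contra! hlt
  have hs : φ s < φ m := hlt.trans_le (hm w (Finset.mem_univ w))
  have hclosed : ∀ p k, p ∈ {p | φ p = φ m} → W p k ≠ 0 → k ∈ {p | φ p = φ m} := by
    intro p k (hp : φ p = φ m) hk
    have hps : p ≠ s := by rintro rfl; exact hs.ne hp
    have hLφ : (laplacian W *ᵥ φ) p ≤ 0 := by
      rw [hφ, Pi.sub_apply, Pi.single_eq_of_ne hps, Pi.single_apply]
      split_ifs <;> norm_num
    exact (eq_of_forall_le_of_laplacian_mulVec_nonpos hnonneg hdiag
      (fun j => hp ▸ hm j (Finset.mem_univ j)) hLφ hk).trans hp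
  exact hs.ne (mem_of_forall_weight_ne_zero_mem hsymm hdiag hker hclosed rfl s)

theorem sink_le_of_laplacian_mulVec_eq_single_sub_single {s t : ι} {φ : ι → ℝ}
    (hφ : laplacian W *ᵥ φ = Pi.single s 1 - Pi.single t 1) (w : ι) : φ t ≤ φ w := by
  have hneg : laplacian W *ᵥ (-φ) = Pi.single t 1 - Pi.single s 1 := by
    rw [mulVec_neg, hφ, neg_sub]
  simpa using le_source_of_laplacian_mulVec_eq_single_sub_single hsymm hnonneg hdiag hker hneg w

end MaximumPrinciple

end Laplacian

theorem stmt_4_general {n : ℕ} (W : Fin n → Fin n → ℝ)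
    (hsymm : ∀ u v, W u v = W v u) (hnonneg : ∀ u v, 0 ≤ W u v)
    (hdiag : ∀ u, W u u = 0)
    (L : Matrix (Fin n) (Fin n) ℝ)
    (hL : L = Matrix.of fun i j => if i = j then ∑ k, W i k else -(W i j))
    (hconn : L.rank = n - 1)
    (Lp : Matrix (Fin n) (Fin n) ℝ) (hLp : MoorePenrose L Lp)
    (R : Fin n → Fin n → ℝ)
    (hR : ∀ u v, R u v = bv u v ⬝ᵥ (Lp *ᵥ bv u v))
    (u v x : Fin n) :
    R u x ≤ R u v + R v x := by
  obtain rfl : L = laplacian W := hL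
  have hker : ∀ g : Fin n → ℝ, laplacian W *ᵥ g = 0 → ∃ c : ℝ, g = fun _ => c :=
    fun _ => exists_const_of_mulVec_eq_zero (laplacian_mulVec_one hdiag)
      (by rwa [Fintype.card_fin])
  have hpot : ∀ a b : Fin n, laplacian W *ᵥ (Lp *ᵥ bv a b) = bv a b := by
    refine fun a b => hLp.mulVec_mulVec_eq_self (laplacian_transpose hsymm) fun z hz => ?_
    obtain ⟨c, rfl⟩ := hker z hz
    rw [dotProduct_comm, bv_dotProduct, sub_self]
  have hcross_uv := le_source_of_laplacian_mulVec_eq_single_sub_single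
    hsymm hnonneg hdiag hker (hpot v x) u
  have hcross_vx := sink_le_of_laplacian_mulVec_eq_single_sub_single
    hsymm hnonneg hdiag hker (hpot u v) x
  rw [hR, hR, hR, ← bv_add_bv u v x, mulVec_add, add_dotProduct, dotProduct_add,
    dotProduct_add, bv_dotProduct u v (Lp *ᵥ bv v x), bv_dotProduct v x (Lp *ᵥ bv u v)]
  linarith

/-- For a connected weighted undirected graph with Laplacian `L`, the effective resistance
`R(u,v) = b_{uv}ᵀ L⁺ b_{uv}` satisfies the triangle inequality
`R(u,x) ≤ R(u,v) + R(v,x)`. -/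
theorem stmt_4 {n : ℕ} (hn : 0 < n) (W : Fin n → Fin n → ℝ)
    (hsymm : ∀ u v, W u v = W v u) (hnonneg : ∀ u v, 0 ≤ W u v)
    (hdiag : ∀ u, W u u = 0)
    (L : Matrix (Fin n) (Fin n) ℝ)
    (hL : L = Matrix.of fun i j => if i = j then ∑ k, W i k else -(W i j))
    (hconn : L.rank = n - 1)
    (Lp : Matrix (Fin n) (Fin n) ℝ) (hLp : MoorePenrose L Lp)
    (R : Fin n → Fin n → ℝ)
    (hR : ∀ u v, R u v = bv u v ⬝ᵥ (Lp *ᵥ bv u v))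
    (u v x : Fin n) :
    R u x ≤ R u v + R v x :=
  stmt_4_general W hsymm hnonneg hdiag L hL hconn Lp hLp R hR u v x
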